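/- arXiv:1302.3811 — 2 statements merged into one kernel-verified Lean document; each statement's English description precedes it below -/
import Mathlib

section
/- For every loopless matroid M on a finite ground set E, the modified indicated chromatic number of M equals the chromatic number of M, i.e., χ_i^mod(M) = χ(M). -/
open Function

/-- A partial coloring `c` (with `none` meaning "uncolored") of the ground set of the
matroid `M`, using colors from `Fin n`, is proper when for each color `j` the elements
of the ground set colored `j` form an independent set of `M`. -/
def ProperColoring {α : Type*} {n : ℕ} (M : Matroid α) (c : α → Option (Fin n)) : Prop :=
  ∀ j : Fin n, M.Indep {x ∈ M.E | c x = some j}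

/-- Coloring one more element strictly decreases the number of uncolored elements. -/
theorem uncolored_update_lt {α β : Type*} [DecidableEq α] {E : Set α} (hE : E.Finite)
    {c : α → Option β} {e : α} (he : e ∈ E) (hce : c e = none) (j : β) :
    {x ∈ E | Function.update c e (some j) x = none}.ncard < {x ∈ E | c x = none}.ncard := by
  apply Set.ncard_lt_ncard
  · constructor
    · rintro x ⟨hxE, hxc⟩
      refine ⟨hxE, ?_⟩
      rcases eq_or_ne x e with rfl | hne
      · simp [Function.update_self] at hxc
      · rwa [Function.update_of_ne hne] at hxc
    · intro hsub
      have := hsub ⟨he, hce⟩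
      simp [Function.update_self] at this
  · exact hE.subset (Set.sep_subset _ _)

/-- Alice wins the modified indicated coloring game on the matroid `M` (with finite ground
set) with the color set `Fin n`, from the partial coloring `c`; defined by recursion on the
number of uncolored elements: either every element of the ground set is colored, or both of
the following hold: (i) there is an uncolored element `e` such that at least one color can
be assigned to `e` keeping the coloring proper, and for every such color Alice wins from the
extended coloring (Alice indicates, Bob colors); and (ii) for every uncolored element `e`
there is a color whose assignment to `e` keeps the coloring proper and such that Alice wins
from the extended coloring (Bob indicates, Alice colors). -/
def AliceWinsMod {α : Type*} [DecidableEq α] {n : ℕ} (M : Matroid α) (hE : M.E.Finite)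
    (c : α → Option (Fin n)) : Prop :=
  (∀ e ∈ M.E, c e ≠ none) ∨
    ((∃ e, ∃ _ : e ∈ M.E, ∃ _ : c e = none,
        (∃ j : Fin n, ProperColoring M (Function.update c e (some j))) ∧
        ∀ j : Fin n, ProperColoring M (Function.update c e (some j)) →
          AliceWinsMod M hE (Function.update c e (some j))) ∧
      (∀ e, e ∈ M.E → c e = none →
        ∃ j : Fin n, ProperColoring M (Function.update c e (some j)) ∧
          AliceWinsMod M hE (Function.update c e (some j))))
termination_by {x ∈ M.E | c x = none}.ncard
decreasing_by all_goals (apply uncolored_update_lt <;> assumption)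

/-- The modified indicated chromatic number `χᵢᵐᵒᵈ(M)`: the least size `n` of a color set
for which Alice wins the modified indicated coloring game from the everywhere-uncolored
coloring. -/
noncomputable def modifiedIndicatedChromaticNumber {α : Type*} [DecidableEq α] (M : Matroid α)
    (hE : M.E.Finite) : ℕ :=
  sInf {n : ℕ | AliceWinsMod (n := n) M hE (fun _ => none)}

/-- The chromatic number `χ(M)`: the least `n` such that the ground set of `M` is the
union of `n` independent sets of `M`. -/
noncomputable def chromaticNumber {α : Type*} (M : Matroid α) : ℕ :=
  sInf {n : ℕ | ∃ V : Fin n → Set α, (∀ i, M.Indep (V i)) ∧ ⋃ i, V i = M.E}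

/-! Let `Cⱼ` be the color classes of a proper partial coloring and `U` its uncolored elements.
Alice plays so as to preserve Rado's condition `|S| ≤ ∑ⱼ (r(S ∪ Cⱼ) - r(Cⱼ))` for all `S ⊆ U`,
which holds at the start when `E` is a union of `n` independent sets. The excess (`slack`) is
submodular in `S`, so the sets where it vanishes (tight sets) are closed under `∪` and `∩`, and a
color `j` admissible for `e` breaks the condition only if some tight `S ∌ e` has
`e ∈ cl(S ∪ Cⱼ)`.

If Bob indicates `e`, some admissible color is safe: otherwise the union `T` of the blocking
tight sets spans `e` together with every `Cⱼ`, and `insert e T` violates the condition.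
If Alice indicates, she takes `e` in a minimal nonempty tight set `T`. A tight `S` blocking
Bob's color `j` is disjoint from `T` by minimality, and then `e ∈ T ∩ cl(S ∪ Cⱼ) \ cl(Cⱼ)` makes
the submodular inequality for `S ∪ Cⱼ`, `T ∪ Cⱼ` strict, contradicting that `S ∪ T` is tight. -/

open Set

namespace Matroid

variable {α : Type*} {M : Matroid α} {A B I X Y : Set α} {e : α}

-- `toNat` sends infinite rank to `0`; the lemmas that need the true value assume `RankFinite`.
noncomputable def rk (M : Matroid α) (X : Set α) : ℕ := (M.eRk X).toNat

section rank

lemma Indep.rk_eq_ncard (hI : M.Indep I) : M.rk I = I.ncard := by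
  rw [rk, hI.eRk_eq_encard, ncard_def]

lemma rk_insert_of_mem_closure (he : e ∈ M.closure X) : M.rk (insert e X) = M.rk X := by
  rw [rk, rk, ← eRk_insert_closure_eq, insert_eq_of_mem he, eRk_closure_eq]

variable [M.RankFinite]

lemma cast_rk_eq (X : Set α) : (M.rk X : ℕ∞) = M.eRk X :=
  ENat.natCast_toNat (M.isRkFinite_set X).eRk_lt_top.ne

lemma rk_mono (h : X ⊆ Y) : M.rk X ≤ M.rk Y :=
  ENat.toNat_le_toNat (M.eRk_mono h) (M.isRkFinite_set Y).eRk_lt_top.ne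

lemma rk_inter_add_rk_union_le (X Y : Set α) :
    M.rk (X ∩ Y) + M.rk (X ∪ Y) ≤ M.rk X + M.rk Y := by
  have h := M.eRk_inter_add_eRk_union_le X Y
  simp only [← cast_rk_eq] at h
  exact_mod_cast h

lemma rk_inter_union_add_rk_union_union_le (X Y Z : Set α) :
    M.rk ((X ∩ Y) ∪ Z) + M.rk ((X ∪ Y) ∪ Z) ≤ M.rk (X ∪ Z) + M.rk (Y ∪ Z) := by
  rw [inter_union_distrib_right, union_union_distrib_right]
  exact M.rk_inter_add_rk_union_le _ _

lemma rk_insert_of_notMem_closure (he : e ∈ M.E \ M.closure X) :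
    M.rk (insert e X) = M.rk X + 1 := by
  have h := eRk_insert_eq_add_one he
  simp only [← cast_rk_eq] at h
  exact_mod_cast h

lemma rk_inter_add_rk_union_lt (heB : e ∈ B) (heA : e ∈ M.closure A)
    (he : e ∈ M.E \ M.closure (A ∩ B)) : M.rk (A ∩ B) + M.rk (A ∪ B) < M.rk A + M.rk B := by
  have h := M.rk_inter_add_rk_union_le (insert e A) B
  rw [insert_inter_of_mem heB, insert_union, insert_eq_of_mem (mem_union_right A heB),
    rk_insert_of_notMem_closure he, rk_insert_of_mem_closure heA] at h
  omega

end rank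

section coloring

variable {n : ℕ} (M) (c : α → Option (Fin n))

def colorClass (j : Fin n) : Set α := {x ∈ M.E | c x = some j}

def uncolored : Set α := {x ∈ M.E | c x = none}

noncomputable def slack (S : Set α) : ℤ :=
  ∑ j, ((M.rk (S ∪ M.colorClass c j) : ℤ) - M.rk (M.colorClass c j)) - S.ncard

def RadoCondition : Prop := ∀ S ⊆ M.uncolored c, 0 ≤ M.slack c S

def IsTight (S : Set α) : Prop := S ⊆ M.uncolored c ∧ M.slack c S = 0

variable {M c} {S T : Set α} {i j : Fin n}

lemma colorClass_subset_ground : M.colorClass c j ⊆ M.E := sep_subset _ _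

lemma uncolored_subset_ground : M.uncolored c ⊆ M.E := sep_subset _ _

lemma properColoring_iff : ProperColoring M c ↔ ∀ j, M.Indep (M.colorClass c j) := Iff.rfl

@[simp]
lemma slack_empty : M.slack c ∅ = 0 := by
  simp [slack]

section update

variable [DecidableEq α]

lemma colorClass_update_self (he : e ∈ M.E) :
    M.colorClass (update c e (some j)) j = insert e (M.colorClass c j) := by
  ext x
  rcases eq_or_ne x e with rfl | hne
  · simp [colorClass, he]
  · simp [colorClass, hne]

lemma colorClass_update_of_ne (hce : c e = none) (hij : i ≠ j) :
    M.colorClass (update c e (some j)) i = M.colorClass c i := by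
  ext x
  rcases eq_or_ne x e with rfl | hne
  · simp [colorClass, hce, hij.symm]
  · simp [colorClass, update_of_ne hne]

lemma uncolored_update : M.uncolored (update c e (some j)) = M.uncolored c \ {e} := by
  ext x
  rcases eq_or_ne x e with rfl | hne
  · simp [uncolored]
  · simp [uncolored, hne]

lemma properColoring_update_iff (hc : ProperColoring M c) (he : e ∈ M.uncolored c) :
    ProperColoring M (update c e (some j)) ↔ e ∉ M.closure (M.colorClass c j) := by
  have heC : e ∉ M.colorClass c j := fun h => Option.some_ne_none j (h.2.symm.trans he.2)
  have hj : M.Indep (M.colorClass (update c e (some j)) j) ↔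
      e ∉ M.closure (M.colorClass c j) := by
    rw [colorClass_update_self he.1, (properColoring_iff.1 hc j).insert_indep_iff_of_notMem heC,
      mem_sdiff, and_iff_right he.1]
  rw [properColoring_iff, ← hj]
  refine ⟨fun h => h j, fun h i => ?_⟩
  rcases eq_or_ne i j with rfl | hij
  · exact h
  · rw [colorClass_update_of_ne he.2 hij]
    exact hc i

end update

lemma isTight_empty : M.IsTight c ∅ := ⟨empty_subset _, slack_empty⟩

section slack

variable [M.Finite]

lemma slack_add_slack_eq (hS : S ⊆ M.E) (hT : T ⊆ M.E) :
    M.slack c S + M.slack c T = M.slack c (S ∪ T) + M.slack c (S ∩ T) +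
      ∑ j, ((M.rk (S ∪ M.colorClass c j) : ℤ) + M.rk (T ∪ M.colorClass c j)
        - M.rk ((S ∪ T) ∪ M.colorClass c j) - M.rk ((S ∩ T) ∪ M.colorClass c j)) := by
  have hcard : ((S ∪ T).ncard : ℤ) + (S ∩ T).ncard = S.ncard + T.ncard := by
    exact_mod_cast ncard_union_add_ncard_inter S T (M.set_finite S) (M.set_finite T)
  simp only [slack, Finset.sum_sub_distrib, Finset.sum_add_distrib]
  linarith

lemma slack_union_add_slack_inter_le (hS : S ⊆ M.E) (hT : T ⊆ M.E) :
    M.slack c (S ∪ T) + M.slack c (S ∩ T) ≤ M.slack c S + M.slack c T := by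
  rw [slack_add_slack_eq hS hT, le_add_iff_nonneg_right]
  refine Finset.sum_nonneg fun j _ => ?_
  have := M.rk_inter_union_add_rk_union_union_le S T (M.colorClass c j)
  omega

lemma slack_union_add_slack_inter_lt (hS : S ⊆ M.E) (hT : T ⊆ M.E) (heT : e ∈ T)
    (heS : e ∈ M.closure (S ∪ M.colorClass c j))
    (he : e ∈ M.E \ M.closure ((S ∩ T) ∪ M.colorClass c j)) :
    M.slack c (S ∪ T) + M.slack c (S ∩ T) < M.slack c S + M.slack c T := by
  rw [slack_add_slack_eq hS hT, lt_add_iff_pos_right]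
  refine Finset.sum_pos' (fun i _ => ?_) ⟨j, Finset.mem_univ j, ?_⟩
  · have := M.rk_inter_union_add_rk_union_union_le S T (M.colorClass c i)
    omega
  · have := rk_inter_add_rk_union_lt (mem_union_left _ heT) heS
      (by rwa [← inter_union_distrib_right])
    rw [← inter_union_distrib_right, ← union_union_distrib_right] at this
    omega

lemma slack_insert (hS : S ⊆ M.E) (heS : e ∉ S) :
    M.slack c (insert e S) = M.slack c S - 1 +
      ∑ j, (M.rk (insert e (S ∪ M.colorClass c j)) - M.rk (S ∪ M.colorClass c j) : ℤ) := by
  simp only [slack, insert_union, ncard_insert_of_notMem heS (M.set_finite S),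
    Finset.sum_sub_distrib]
  push_cast
  ring

lemma slack_update [DecidableEq α] (he : e ∈ M.uncolored c)
    (hej : e ∉ M.closure (M.colorClass c j)) :
    M.slack (update c e (some j)) S = M.slack c S +
      ((M.rk (insert e (S ∪ M.colorClass c j)) : ℤ) - M.rk (S ∪ M.colorClass c j)) - 1 := by
  have hrest : ∀ i ∈ ({j}ᶜ : Finset (Fin n)),
      M.colorClass (update c e (some j)) i = M.colorClass c i := fun i hi =>
    colorClass_update_of_ne he.2 (Finset.mem_compl.1 hi ∘ Finset.mem_singleton.2)
  simp only [slack, Fintype.sum_eq_add_sum_compl j]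
  rw [Finset.sum_congr rfl fun i hi => by rw [hrest i hi], colorClass_update_self he.1,
    union_insert, rk_insert_of_notMem_closure ⟨he.1, hej⟩]
  push_cast
  ring

namespace RadoCondition

variable (hc : M.RadoCondition c)
include hc

lemma isTight_union_and_isTight_inter (hS : M.IsTight c S) (hT : M.IsTight c T) :
    M.IsTight c (S ∪ T) ∧ M.IsTight c (S ∩ T) := by
  have hsub := slack_union_add_slack_inter_le (c := c) (hS.1.trans uncolored_subset_ground)
    (hT.1.trans uncolored_subset_ground)
  have hunion := hc (S ∪ T) (union_subset hS.1 hT.1)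
  have hinter := hc (S ∩ T) (inter_subset_left.trans hS.1)
  exact ⟨⟨union_subset hS.1 hT.1, by linarith [hS.2, hT.2]⟩,
    ⟨inter_subset_left.trans hS.1, by linarith [hS.2, hT.2]⟩⟩

lemma isTight_biUnion {ι : Type*} (s : Finset ι) {f : ι → Set α}
    (hf : ∀ i ∈ s, M.IsTight c (f i)) : M.IsTight c (⋃ i ∈ s, f i) := by
  classical
  induction s using Finset.induction_on with
  | empty => simpa using isTight_empty
  | insert a s _ ih =>
    rw [Finset.set_biUnion_insert]
    exact (hc.isTight_union_and_isTight_inter (hf a (Finset.mem_insert_self a s))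
      (ih fun i hi => hf i (Finset.mem_insert_of_mem hi))).1

variable [DecidableEq α]

lemma exists_isTight_of_not_radoCondition_update (he : e ∈ M.uncolored c)
    (hej : e ∉ M.closure (M.colorClass c j))
    (hbad : ¬ M.RadoCondition (update c e (some j))) :
    ∃ S, M.IsTight c S ∧ e ∉ S ∧ e ∈ M.closure (S ∪ M.colorClass c j) := by
  simp only [RadoCondition, uncolored_update, not_forall, not_le] at hbad
  obtain ⟨S, hS, hneg⟩ := hbad
  have hSE : S ⊆ M.E := hS.trans (sdiff_subset.trans uncolored_subset_ground)
  have heS : e ∉ S := fun h => (hS h).2 rfl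
  rw [slack_update he hej] at hneg
  have hmono := M.rk_mono (subset_insert e (S ∪ M.colorClass c j))
  have hslack := hc S (hS.trans sdiff_subset)
  refine ⟨S, ⟨hS.trans sdiff_subset, by omega⟩, heS, by_contra fun hcl => ?_⟩
  rw [rk_insert_of_notMem_closure ⟨he.1, hcl⟩] at hneg
  omega

lemma exists_radoCondition_update (he : e ∈ M.uncolored c) :
    ∃ j, e ∉ M.closure (M.colorClass c j) ∧ M.RadoCondition (update c e (some j)) := by
  by_contra! hbad
  have hspan : ∀ j, ∃ S,
      M.IsTight c S ∧ e ∉ S ∧ e ∈ M.closure (S ∪ M.colorClass c j) := by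
    intro j
    by_cases hej : e ∈ M.closure (M.colorClass c j)
    · exact ⟨∅, isTight_empty, notMem_empty e, by rwa [empty_union]⟩
    · exact hc.exists_isTight_of_not_radoCondition_update he hej (hbad j hej)
  choose S hSt heS hclS using hspan
  set T := ⋃ j ∈ Finset.univ, S j
  have hT : M.IsTight c T := hc.isTight_biUnion _ fun j _ => hSt j
  have heT : e ∉ T := by simpa [T] using heS
  have hclT : ∀ j, e ∈ M.closure (T ∪ M.colorClass c j) := fun j =>
    M.closure_subset_closure (union_subset_union_left _ (subset_biUnion_of_mem (u := S)
      (Finset.mem_coe.2 (Finset.mem_univ j)))) (hclS j)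
  have hinsert := slack_insert (c := c) (hT.1.trans uncolored_subset_ground) heT
  simp only [rk_insert_of_mem_closure (hclT _), sub_self, Finset.sum_const_zero, hT.2] at hinsert
  have := hc (insert e T) (insert_subset he hT.1)
  omega

lemma exists_forall_radoCondition_update (hU : (M.uncolored c).Nonempty) :
    ∃ e ∈ M.uncolored c, ∀ j, e ∉ M.closure (M.colorClass c j) →
      M.RadoCondition (update c e (some j)) := by
  by_cases htight : ∃ T, M.IsTight c T ∧ T.Nonempty
  · obtain ⟨T, ⟨hT, e, heT⟩, hmin⟩ :=
      exists_minimalFor_of_wellFoundedLT (fun T => M.IsTight c T ∧ T.Nonempty) ncard htight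
    have he := hT.1 heT
    refine ⟨e, he, fun j hej => by_contra fun hbad => ?_⟩
    obtain ⟨S, hS, heS, hclS⟩ := hc.exists_isTight_of_not_radoCondition_update he hej hbad
    have hSE := hS.1.trans uncolored_subset_ground
    have hTE := hT.1.trans uncolored_subset_ground
    have hST : S ∩ T = ∅ := by
      by_contra hne
      have hle := hmin
        ⟨(hc.isTight_union_and_isTight_inter hS hT).2, nonempty_iff_ne_empty.2 hne⟩
        (ncard_le_ncard inter_subset_right (M.set_finite T))
      exact (ncard_lt_ncard (inter_ssubset_right_iff.2 fun h => heS (h heT))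
        (M.set_finite T)).not_ge hle
    have hlt := slack_union_add_slack_inter_lt hSE hTE heT hclS
      (by rwa [hST, empty_union, mem_sdiff, and_iff_right he.1])
    rw [hST, slack_empty, (hc.isTight_union_and_isTight_inter hS hT).1.2, hS.2, hT.2] at hlt
    exact hlt.false
  · obtain ⟨e, he⟩ := hU
    refine ⟨e, he, fun j hej => by_contra fun hbad => ?_⟩
    obtain ⟨S, hS, -, hclS⟩ := hc.exists_isTight_of_not_radoCondition_update he hej hbad
    obtain rfl | hSne := S.eq_empty_or_nonempty
    · exact hej (by rwa [empty_union] at hclS)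
    · exact htight ⟨S, hS, hSne⟩

end RadoCondition

end slack

end coloring

section game

variable {n : ℕ}

lemma properColoring_none : ProperColoring M (fun _ => (none : Option (Fin n))) := fun _ => by
  simp

variable [DecidableEq α]

lemma aliceWinsMod_of_radoCondition (hE : M.E.Finite) (c : α → Option (Fin n))
    (hp : ProperColoring M c) (hc : M.RadoCondition c) : AliceWinsMod M hE c := by
  have : M.Finite := ⟨hE⟩
  rw [AliceWinsMod]
  obtain hU | hU := (M.uncolored c).eq_empty_or_nonempty
  · exact Or.inl fun e he hce => (eq_empty_iff_forall_notMem.1 hU) e ⟨he, hce⟩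
  refine Or.inr ⟨?_, fun e heE hce => ?_⟩
  · obtain ⟨e, ⟨heE, hce⟩, hgood⟩ := hc.exists_forall_radoCondition_update hU
    have he : e ∈ M.uncolored c := ⟨heE, hce⟩
    obtain ⟨j, hej, -⟩ := hc.exists_radoCondition_update he
    refine ⟨e, heE, hce, ⟨j, (properColoring_update_iff hp he).2 hej⟩, fun j hj => ?_⟩
    exact aliceWinsMod_of_radoCondition hE _ hj (hgood j ((properColoring_update_iff hp he).1 hj))
  · obtain ⟨j, hej, hrado⟩ := hc.exists_radoCondition_update ⟨heE, hce⟩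
    have hj := (properColoring_update_iff hp ⟨heE, hce⟩).2 hej
    exact ⟨j, hj, aliceWinsMod_of_radoCondition hE _ hj hrado⟩
termination_by {x ∈ M.E | c x = none}.ncard
decreasing_by all_goals exact uncolored_update_lt hE heE hce _

lemma exists_total_properColoring_of_aliceWinsMod (hE : M.E.Finite) (c : α → Option (Fin n))
    (hp : ProperColoring M c) (hw : AliceWinsMod M hE c) :
    ∃ d : α → Option (Fin n), ProperColoring M d ∧ ∀ x ∈ M.E, d x ≠ none := by
  rw [AliceWinsMod] at hw
  obtain hall | ⟨⟨e, he, hce, ⟨j, hj⟩, hwin⟩, -⟩ := hw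
  · exact ⟨c, hp, hall⟩
  · exact exists_total_properColoring_of_aliceWinsMod hE _ hj (hwin j hj)
termination_by {x ∈ M.E | c x = none}.ncard
decreasing_by exact uncolored_update_lt hE he hce j

end game

section partition

variable {n : ℕ}

lemma iUnion_colorClass_eq_ground {d : α → Option (Fin n)} (hd : ∀ x ∈ M.E, d x ≠ none) :
    ⋃ j, M.colorClass d j = M.E := by
  refine subset_antisymm (iUnion_subset fun j => colorClass_subset_ground) fun x hx => ?_
  obtain ⟨j, hj⟩ := Option.ne_none_iff_exists'.1 (hd x hx)
  exact mem_iUnion.2 ⟨j, hx, hj⟩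

lemma radoCondition_none_of_iUnion_eq_ground [M.Finite] {V : Fin n → Set α}
    (hV : ∀ j, M.Indep (V j)) (hVE : ⋃ j, V j = M.E) :
    M.RadoCondition (fun _ => (none : Option (Fin n))) := by
  intro S hS
  have hSE : S ⊆ M.E := hS.trans uncolored_subset_ground
  have hcover : S.ncard ≤ ∑ j, M.rk S :=
    calc S.ncard = (⋃ j, S ∩ V j).ncard := by rw [← inter_iUnion, hVE, inter_eq_left.2 hSE]
      _ ≤ ∑ j, (S ∩ V j).ncard := ncard_iUnion_le_of_fintype _
      _ = ∑ j, M.rk (S ∩ V j) := by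
        simp only [((hV _).subset inter_subset_right).rk_eq_ncard]
      _ ≤ ∑ j, M.rk S := Finset.sum_le_sum fun j _ => M.rk_mono inter_subset_left
  simp only [slack, colorClass, reduceCtorEq, and_false, ofPred_false, union_empty,
    M.empty_indep.rk_eq_ncard, ncard_empty, CharP.cast_eq_zero, sub_zero, sub_nonneg]
  exact_mod_cast hcover

end partition

lemma aliceWinsMod_none_iff [DecidableEq α] {n : ℕ} (hE : M.E.Finite) :
    AliceWinsMod (n := n) M hE (fun _ => none) ↔
      ∃ V : Fin n → Set α, (∀ i, M.Indep (V i)) ∧ ⋃ i, V i = M.E := by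
  have : M.Finite := ⟨hE⟩
  refine ⟨fun hw => ?_, fun ⟨V, hV, hVE⟩ => ?_⟩
  · obtain ⟨d, hd, hdE⟩ :=
      exists_total_properColoring_of_aliceWinsMod hE _ properColoring_none hw
    exact ⟨M.colorClass d, hd, iUnion_colorClass_eq_ground hdE⟩
  · exact aliceWinsMod_of_radoCondition hE _ properColoring_none
      (radoCondition_none_of_iUnion_eq_ground hV hVE)

end Matroid

theorem modifiedIndicatedChromaticNumber_eq_chromaticNumber_general {α : Type*} [DecidableEq α]
    (M : Matroid α) (hE : M.E.Finite) :
    modifiedIndicatedChromaticNumber M hE = chromaticNumber M := by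
  unfold modifiedIndicatedChromaticNumber chromaticNumber
  simp only [Matroid.aliceWinsMod_none_iff]

/-- For every loopless matroid `M` on a finite ground set, `χᵢᵐᵒᵈ(M) = χ(M)`. -/
theorem modifiedIndicatedChromaticNumber_eq_chromaticNumber {α : Type*} [DecidableEq α]
    (M : Matroid α) (hE : M.E.Finite) (hloopless : ∀ e ∈ M.E, M.Indep {e}) :
    modifiedIndicatedChromaticNumber M hE = chromaticNumber M :=
  modifiedIndicatedChromaticNumber_eq_chromaticNumber_general M hE
end

section
/- Let M_1, …, M_k be matroids on the same finite ground set E, let A ⊆ E, and for each i let U_i ⊆ A be independent in M_i. If the contracted matroids M_1/A, …, M_k/A satisfy the rank condition that the sum over i of the rank of B in M_i/A is at least |B| for every B ⊆ E \ A, then the contracted matroids M_1/U_1, …, M_k/U_k also satisfy: for every B ⊆ E \ A, the sum over i of the rank of B in M_i/U_i is at least |B|. Consequently, there exist sets U'_1, …, U'_k ⊆ E \ A with U'_1 ∪ … ∪ U'_k = E \ A such that U'_i is independent in M_i/U_i for each i. -/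
/-- The rank of a set `A` in the matroid `M`: the largest cardinality of an independent
subset of `A`. -/
noncomputable def rankFun {α : Type*} (M : Matroid α) (A : Set α) : ℕ :=
  sSup {n : ℕ | ∃ I, I ⊆ A ∧ M.Indep I ∧ I.ncard = n}

/-- `I` is independent in the contraction `M/A` (the matroid on `M.E \ A` whose rank
function is `B ↦ rankFun M (A ∪ B) - rankFun M A`): that is, `I ⊆ M.E \ A` and the rank of
`I` in `M/A` equals its cardinality. -/
def IndepInContract {α : Type*} (M : Matroid α) (A I : Set α) : Prop :=
  I ⊆ M.E \ A ∧ rankFun M (A ∪ I) = rankFun M A + I.ncard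

/-!
For `U ⊆ A`, submodularity of the rank gives `r(A ∪ B) - r(A) ≤ r(U ∪ B) - r(U)`, so the rank
condition passes from `Mᵢ / A` to `Mᵢ / Uᵢ`. The cover is Edmonds' matroid covering theorem for
the matroids `Mᵢ / Uᵢ` on `S = E \ A`, proved by induction on `S`: an element `e ∈ S` goes to some
`Mᵢ` in which it is a nonloop and after whose contraction by `e` the rank condition still holds.
If there were no such `i`, every `i` would give a tight set `Tᵢ ⊆ S \ {e}` (one with
`∑ⱼ rⱼ(Tᵢ) = |Tᵢ|`) spanning `e` in `Mᵢ`. Tight sets are closed under union by submodularity, so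
`⋃ Tᵢ` is tight and spans `e` in every `Mᵢ`, and adding `e` to it violates the rank condition.
-/

lemma Finset.sum_update_add_apply {ι β : Type*} [Fintype ι] [DecidableEq ι] [AddCommMonoid β]
    (f : ι → β) (i : ι) (b : β) : ∑ j, Function.update f i b j + f i = ∑ j, f j + b := by
  rw [Finset.sum_update_of_mem (Finset.mem_univ i),
    Finset.sum_eq_sum_sdiff_singleton_add (Finset.mem_univ i) f]
  abel

lemma Set.iUnion_update_insert {α ι : Type*} [DecidableEq ι] (I : ι → Set α) (i : ι) (e : α) :
    ⋃ j, Function.update I i (insert e (I i)) j = insert e (⋃ j, I j) := by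
  ext x
  simp only [mem_iUnion, mem_insert_iff]
  constructor
  · rintro ⟨j, hj⟩
    rcases eq_or_ne j i with rfl | hji
    · rw [Function.update_self] at hj
      exact hj.imp_right (⟨j, ·⟩)
    · rw [Function.update_of_ne hji] at hj
      exact .inr ⟨j, hj⟩
  · rintro (rfl | ⟨j, hj⟩)
    · exact ⟨i, by simp⟩
    · rcases eq_or_ne j i with rfl | hji
      · exact ⟨j, by simp [hj]⟩
      · exact ⟨j, by simpa [hji] using hj⟩

open Set

namespace Matroid

variable {α : Type*} {M : Matroid α} {A B C I U X Y : Set α} {e : α}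

lemma rankFun_eq_toNat_eRk (M : Matroid α) (X : Set α) : rankFun M X = (M.eRk X).toNat := by
  have hset : {n : ℕ | ∃ I, I ⊆ X ∧ M.Indep I ∧ I.ncard = n} =
      {n : ℕ | (n : ℕ∞) ≤ M.eRk X} := by
    ext n
    simp only [mem_ofPred_eq, le_eRk_iff]
    constructor
    · rintro ⟨I, hIX, hI, rfl⟩
      obtain hfin | hinf := I.finite_or_infinite
      · exact ⟨I, hIX, hI, hfin.cast_ncard_eq.symm⟩
      · exact ⟨∅, empty_subset _, M.empty_indep, by simp [hinf.ncard]⟩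
    · rintro ⟨I, hIX, hI, hIn⟩
      exact ⟨I, hIX, hI, by rw [ncard_def, hIn, ENat.toNat_natCast]⟩
  rw [rankFun, hset]
  cases M.eRk X with
  -- the set is all of `ℕ`, whose `sSup` is the junk value `0 = ⊤.toNat`
  | top => simp
  | coe m =>
    simp only [Nat.cast_le, ENat.toNat_natCast]
    exact csSup_Iic

lemma cast_rankFun (hX : M.IsRkFinite X) : (rankFun M X : ℕ∞) = M.eRk X := by
  rw [rankFun_eq_toNat_eRk, ENat.natCast_toNat hX.eRk_lt_top.ne]

lemma Indep.rankFun_eq (hI : M.Indep I) : rankFun M I = I.ncard := by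
  rw [rankFun_eq_toNat_eRk, hI.eRk_eq_encard, ncard_def]

@[simp]
lemma rankFun_empty (M : Matroid α) : rankFun M ∅ = 0 := by
  rw [M.empty_indep.rankFun_eq, ncard_empty]

lemma rankFun_mono (hY : M.IsRkFinite Y) (hXY : X ⊆ Y) : rankFun M X ≤ rankFun M Y := by
  rw [← Nat.cast_le (α := ℕ∞), cast_rankFun (hY.subset hXY), cast_rankFun hY]
  exact M.eRk_mono hXY

lemma rankFun_union_add_rankFun_inter_le (hX : M.IsRkFinite X) (hY : M.IsRkFinite Y) :
    rankFun M (X ∪ Y) + rankFun M (X ∩ Y) ≤ rankFun M X + rankFun M Y := by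
  rw [← Nat.cast_le (α := ℕ∞), Nat.cast_add, Nat.cast_add, cast_rankFun (hX.union hY),
    cast_rankFun hX.inter_right, cast_rankFun hX, cast_rankFun hY, add_comm]
  exact M.eRk_inter_add_eRk_union_le X Y

lemma rankFun_union_sub_le_of_subset (hA : M.IsRkFinite A) (hB : M.IsRkFinite B) (hUA : U ⊆ A) :
    rankFun M (A ∪ B) - rankFun M A ≤ rankFun M (U ∪ B) - rankFun M U := by
  have hUB : M.IsRkFinite (U ∪ B) := (hA.subset hUA).union hB
  have hsub := rankFun_union_add_rankFun_inter_le hA hUB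
  rw [← union_assoc, union_eq_self_of_subset_right hUA] at hsub
  have hU : rankFun M U ≤ rankFun M (A ∩ (U ∪ B)) :=
    rankFun_mono hA.inter_right (subset_inter hUA subset_union_left)
  have hAB : rankFun M A ≤ rankFun M (A ∪ B) := rankFun_mono (hA.union hB) subset_union_left
  omega

lemma rankFun_insert_of_mem_closure (he : e ∈ M.closure X) :
    rankFun M (insert e X) = rankFun M X := by
  rw [rankFun_eq_toNat_eRk, rankFun_eq_toNat_eRk, ← eRk_insert_closure_eq, insert_eq_of_mem he,
    eRk_closure_eq]

lemma mem_closure_of_rankFun_insert_le (hX : M.IsRkFinite X) (he : e ∈ M.E)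
    (h : rankFun M (insert e X) ≤ rankFun M X) : e ∈ M.closure X := by
  by_contra heX
  rw [← Nat.cast_le (α := ℕ∞), cast_rankFun (hX.insert e), cast_rankFun hX,
    eRk_insert_eq_add_one ⟨he, heX⟩] at h
  exact ((ENat.lt_add_one_iff hX.eRk_lt_top.ne).2 le_rfl).not_ge h

lemma Indep.eRk_contract_add_encard (hC : M.Indep C) (hX : X ⊆ M.E \ C) :
    (M ／ C).eRk X + C.encard = M.eRk (X ∪ C) := by
  obtain ⟨J, hJ⟩ := (M ／ C).exists_isBasis X hX
  have hJC : Disjoint J C := (subset_sdiff.1 (hJ.subset.trans hX)).2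
  rw [hJ.eRk_eq_encard, (hC.union_isBasis_union_of_contract_isBasis hJ).eRk_eq_encard,
    encard_union_eq hJC]

lemma Indep.rankFun_contract_add_ncard (hC : M.Indep C) (hCfin : C.Finite) (hX : X ⊆ M.E \ C)
    (hXfin : X.Finite) : rankFun (M ／ C) X + C.ncard = rankFun M (X ∪ C) := by
  rw [← Nat.cast_inj (R := ℕ∞), Nat.cast_add, cast_rankFun (isRkFinite_of_finite _ hXfin),
    cast_rankFun (isRkFinite_of_finite _ (hXfin.union hCfin)), hCfin.cast_ncard_eq,
    hC.eRk_contract_add_encard hX]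

lemma Indep.indepInContract (hC : M.Indep C) (hCfin : C.Finite) (hI : (M ／ C).Indep I)
    (hIfin : I.Finite) : IndepInContract M C I := by
  refine ⟨hI.subset_ground, ?_⟩
  rw [hC.rankFun_eq, union_comm, ← hC.rankFun_contract_add_ncard hCfin hI.subset_ground hIfin,
    hI.rankFun_eq, add_comm]

section Covering

variable {ι : Type*} [Fintype ι] {N : ι → Matroid α} {S T₁ T₂ : Set α}

lemma sum_rankFun_union_le (hS : S.Finite) (hcond : ∀ B ⊆ S, B.ncard ≤ ∑ i, rankFun (N i) B)
    (hT₁ : T₁ ⊆ S) (hT₂ : T₂ ⊆ S) (h₁ : ∑ i, rankFun (N i) T₁ ≤ T₁.ncard)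
    (h₂ : ∑ i, rankFun (N i) T₂ ≤ T₂.ncard) :
    ∑ i, rankFun (N i) (T₁ ∪ T₂) ≤ (T₁ ∪ T₂).ncard := by
  have hsub : ∑ i, rankFun (N i) (T₁ ∪ T₂) + ∑ i, rankFun (N i) (T₁ ∩ T₂) ≤
      ∑ i, rankFun (N i) T₁ + ∑ i, rankFun (N i) T₂ := by
    simp only [← Finset.sum_add_distrib]
    exact Finset.sum_le_sum fun i _ ↦ rankFun_union_add_rankFun_inter_le
      (isRkFinite_of_finite _ (hS.subset hT₁)) (isRkFinite_of_finite _ (hS.subset hT₂))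
  have hinter := hcond (T₁ ∩ T₂) (inter_subset_left.trans hT₁)
  have hcard := ncard_union_add_ncard_inter T₁ T₂ (hS.subset hT₁) (hS.subset hT₂)
  omega

lemma exists_isNonloop_forall_ncard_le_sum_rankFun_contractElem [DecidableEq ι]
    (hS : S.Finite) (heS : e ∉ S) (hSE : ∀ i, insert e S ⊆ (N i).E)
    (hcond : ∀ B ⊆ insert e S, B.ncard ≤ ∑ i, rankFun (N i) B) :
    ∃ i, (N i).IsNonloop e ∧
      ∀ B ⊆ S, B.ncard ≤ ∑ j, rankFun (Function.update N i (N i ／ {e}) j) B := by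
  by_contra! hbad
  have hcondS : ∀ B ⊆ S, B.ncard ≤ ∑ i, rankFun (N i) B :=
    fun B hB ↦ hcond B (hB.trans (subset_insert e S))
  have htight : ∀ i, ∃ T ⊆ S, ∑ j, rankFun (N j) T ≤ T.ncard ∧ e ∈ (N i).closure T := by
    intro i
    by_cases he : (N i).IsNonloop e
    · obtain ⟨B, hBS, hB⟩ := hbad i he
      have hBE : B ⊆ (N i).E \ {e} :=
        subset_sdiff_singleton ((hBS.trans (subset_insert e S)).trans (hSE i)) (heS <| hBS ·)
      have hcontract := he.indep.rankFun_contract_add_ncard (finite_singleton e) hBE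
        (hS.subset hBS)
      rw [ncard_singleton, union_singleton] at hcontract
      have hupdate := Finset.sum_update_add_apply (fun j ↦ rankFun (N j) B) i
        (rankFun (N i ／ {e}) B)
      simp only [← Function.apply_update (fun _ M ↦ rankFun M B)] at hupdate
      have hmono : rankFun (N i) B ≤ rankFun (N i) (insert e B) :=
        rankFun_mono (isRkFinite_of_finite _ ((hS.subset hBS).insert e)) (subset_insert e B)
      have hBcond := hcondS B hBS
      -- contracting `e` loses rank on `B`, so `B` spans `e` and is tight
      exact ⟨B, hBS, by omega, mem_closure_of_rankFun_insert_le
        (isRkFinite_of_finite _ (hS.subset hBS)) he.mem_ground (by omega)⟩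
    · refine ⟨∅, empty_subset S, by simp, ?_⟩
      exact ((N i).not_isNonloop_iff (hSE i (mem_insert e S))).1 he
  choose T hTS hTtight heT using htight
  have hunion : ⋃ i, T i ∈ {T | T ⊆ S ∧ ∑ j, rankFun (N j) T ≤ T.ncard} := by
    refine SupClosed.iSup_mem (fun T₁ h₁ T₂ h₂ ↦ ?_) ⟨empty_subset S, by simp⟩
      fun i ↦ ⟨hTS i, hTtight i⟩
    exact ⟨union_subset h₁.1 h₂.1, sum_rankFun_union_le hS hcondS h₁.1 h₂.1 h₁.2 h₂.2⟩
  obtain ⟨hUS, hUtight⟩ := hunion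
  have hinsert : ∀ i, rankFun (N i) (insert e (⋃ j, T j)) = rankFun (N i) (⋃ j, T j) :=
    fun i ↦ rankFun_insert_of_mem_closure ((N i).closure_mono (subset_iUnion T i) (heT i))
  have hviolate := hcond _ (insert_subset_insert hUS)
  rw [ncard_insert_of_notMem (heS <| hUS ·) (hS.subset hUS)] at hviolate
  simp only [hinsert] at hviolate
  omega

theorem exists_iUnion_eq_forall_indep_of_ncard_le_sum_rankFun (hS : S.Finite)
    (hSE : ∀ i, S ⊆ (N i).E) (hcond : ∀ B ⊆ S, B.ncard ≤ ∑ i, rankFun (N i) B) :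
    ∃ I : ι → Set α, ⋃ i, I i = S ∧ ∀ i, (N i).Indep (I i) := by
  classical
  induction S, hS using Set.Finite.induction_on generalizing N with
  | empty => exact ⟨fun _ ↦ ∅, iUnion_empty, fun i ↦ (N i).empty_indep⟩
  | @insert e S heS hS ih =>
    obtain ⟨i, he, hcond'⟩ :=
      exists_isNonloop_forall_ncard_le_sum_rankFun_contractElem hS heS hSE hcond
    have hSE' : ∀ j, S ⊆ (Function.update N i (N i ／ {e}) j).E := by
      intro j
      rcases eq_or_ne j i with rfl | hji
      · simpa using subset_sdiff_singleton ((subset_insert e S).trans (hSE j)) heS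
      · simpa [hji] using (subset_insert e S).trans (hSE j)
    obtain ⟨I, hIS, hI⟩ := ih hSE' hcond'
    refine ⟨Function.update I i (insert e (I i)), by rw [iUnion_update_insert, hIS], fun j ↦ ?_⟩
    rcases eq_or_ne j i with rfl | hji
    · have hIj := hI j
      rw [Function.update_self, he.contractElem_indep_iff] at hIj
      simpa using hIj.2
    · simpa [hji] using hI j

end Covering

end Matroid

open Matroid

/-- Let `A ⊆ E` and for each `i` let `U i ⊆ A` be independent in `M i`. If the contractions
`M i / A` satisfy the rank condition `∑ i, (rᵢ(A ∪ B) - rᵢ(A)) ≥ |B|` for every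
`B ⊆ E \ A`, then so do the contractions `M i / U i`, in the sense that
`∑ i, (rᵢ(U i ∪ B) - rᵢ(U i)) ≥ |B|` for every `B ⊆ E \ A`; consequently `E \ A` is
covered by sets `U' i ⊆ E \ A` with `U' i` independent in `M i / U i` for each `i`. -/
theorem contract_indep_cover {α : Type*} {k : ℕ} (M : Fin k → Matroid α) (E : Set α)
    (hE : E.Finite) (hground : ∀ i, (M i).E = E)
    (A : Set α) (hA : A ⊆ E)
    (U : Fin k → Set α) (hUA : ∀ i, U i ⊆ A) (hU : ∀ i, (M i).Indep (U i))
    (hrank : ∀ B ⊆ E \ A, B.ncard ≤ ∑ i, (rankFun (M i) (A ∪ B) - rankFun (M i) A)) :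
    (∀ B ⊆ E \ A, B.ncard ≤ ∑ i, (rankFun (M i) (U i ∪ B) - rankFun (M i) (U i))) ∧
      ∃ U' : Fin k → Set α, (∀ i, U' i ⊆ E \ A) ∧ (⋃ i, U' i = E \ A) ∧
        ∀ i, IndepInContract (M i) (U i) (U' i) := by
  have hUfin : ∀ i, (U i).Finite := fun i ↦ hE.subset ((hUA i).trans hA)
  have hdiff : ∀ i, E \ A ⊆ (M i ／ U i).E := fun i ↦ by
    rw [contract_ground, hground i]
    exact sdiff_subset_sdiff_right (hUA i)
  have hcond : ∀ B ⊆ E \ A, B.ncard ≤ ∑ i, (rankFun (M i) (U i ∪ B) - rankFun (M i) (U i)) :=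
    fun B hB ↦ (hrank B hB).trans <| Finset.sum_le_sum fun i _ ↦
      rankFun_union_sub_le_of_subset (isRkFinite_of_finite _ (hE.subset hA))
        (isRkFinite_of_finite _ (hE.subset (hB.trans sdiff_subset))) (hUA i)
  have hcontract : ∀ i, ∀ B ⊆ E \ A,
      rankFun (M i ／ U i) B = rankFun (M i) (U i ∪ B) - rankFun (M i) (U i) := by
    intro i B hB
    rw [union_comm, ← (hU i).rankFun_contract_add_ncard (hUfin i) ((hB.trans (hdiff i)))
      (hE.subset (hB.trans sdiff_subset)), (hU i).rankFun_eq, Nat.add_sub_cancel]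
  obtain ⟨U', hU'union, hU'indep⟩ := exists_iUnion_eq_forall_indep_of_ncard_le_sum_rankFun
    (N := fun i ↦ M i ／ U i) (hE.subset sdiff_subset) hdiff
    fun B hB ↦ by simpa only [hcontract _ B hB] using hcond B hB
  have hU'sub : ∀ i, U' i ⊆ E \ A := fun i ↦ hU'union ▸ subset_iUnion U' i
  exact ⟨hcond, U', hU'sub, hU'union, fun i ↦ (hU i).indepInContract (hUfin i) (hU'indep i)
    (hE.subset ((hU'sub i).trans sdiff_subset))⟩
end
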